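/- Let d ≥ 2 and let 𝒳 be the unit ball in ℝ^d with the uniform distribution ℙ. Let (ŵ₁, t̂₁), …, (ŵ_k, t̂_k) be any sequence with each ŵ_i a unit vector in ℝ^d and each t̂_i ∈ [0,1]. Define 𝒳^{(1)} = 𝒳 and, for i ≥ 1, 𝒳^{(i+1)} = {x ∈ 𝒳^{(i)} : |⟨ŵ_i, x⟩| < t̂_i}, and let 𝒳^{(i)}(ŵ_i, t̂_i) = {x ∈ 𝒳^{(i)} : |⟨ŵ_i, x⟩| ≥ t̂_i}. Then Σ_{i=1}^k ℙ(𝒳^{(i)}(ŵ_i, t̂_i)) ≥ 1 − (min_{1≤i≤k} t̂_i) √(4d/π). -/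

import Mathlib

/-!
A point of the ball is either labelled in some round `i < k` or survives into the last region,
which lies in the slab `|⟪ŵ_j, x⟫| ≤ t̂_j` of a round `j` with the smallest threshold; hence the
labelled masses sum to at least `1 - ℙ(slab)`. Splitting the space isometrically as `ℝ × ŵ_jᗮ`,
the slab inside the unit ball lies in `[-t̂_j, t̂_j] × (unit ball of ŵ_jᗮ)`, of volume
`2 t̂_j V_{d-1}` (`V_n` the volume of the unit `n`-ball), and log-convexity of `Γ`, in the form
`Γ(s + 3/2) ≤ √(s + 1) Γ(s + 1)`, gives `2 V_{d-1} ≤ √(4d/π) V_d`.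
-/

open MeasureTheory ProbabilityTheory Metric Real
open scoped RealInnerProductSpace

theorem Real.Gamma_add_three_halves_le {s : ℝ} (hs : -1 < s) :
    Gamma (s + 3 / 2) ≤ √(s + 1) * Gamma (s + 1) := by
  have h1 : 0 < s + 1 := by linarith
  have hG : 0 < Gamma (s + 1) := Gamma_pos_of_pos h1
  have hconv := Gamma_mul_add_mul_le_rpow_Gamma_mul_rpow_Gamma h1 (by linarith : 0 < s + 2)
    one_half_pos one_half_pos (add_halves 1)
  rw [show s + 2 = s + 1 + 1 by ring, Gamma_add_one h1.ne', ← mul_rpow hG.le (by positivity),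
    ← sqrt_eq_rpow, show Gamma (s + 1) * ((s + 1) * Gamma (s + 1)) = (s + 1) * Gamma (s + 1) ^ 2
      by ring, sqrt_mul h1.le, sqrt_sq hG.le] at hconv
  convert hconv using 2
  ring

namespace InnerProductSpace

variable {E F : Type*} [NormedAddCommGroup E] [InnerProductSpace ℝ E] [FiniteDimensional ℝ E]
  [MeasurableSpace E] [BorelSpace E] [NormedAddCommGroup F] [InnerProductSpace ℝ F]
  [FiniteDimensional ℝ F] [MeasurableSpace F] [BorelSpace F]

theorem volume_closedBall_zero_one :
    volume (closedBall (0 : F) 1) =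
      ENNReal.ofReal (√π ^ Module.finrank ℝ F / Gamma (Module.finrank ℝ F / 2 + 1)) := by
  cases subsingleton_or_nontrivial F with
  | inl _ =>
    have hb := (stdOrthonormalBasis ℝ F).volume_parallelepiped
    rw [Set.Nonempty.eq_univ ⟨0, (mem_parallelepiped_iff _ _).2 ⟨0, by simp, by simp⟩⟩] at hb
    rw [Set.Nonempty.eq_univ ⟨0, mem_closedBall_self zero_le_one⟩, hb,
      Module.finrank_zero_of_subsingleton]
    simp
  | inr _ => simp [InnerProductSpace.volume_closedBall]

theorem two_mul_volume_closedBall_le (h : Module.finrank ℝ F + 1 = Module.finrank ℝ E) :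
    ENNReal.ofReal 2 * volume (closedBall (0 : F) 1)
      ≤ ENNReal.ofReal √(4 * Module.finrank ℝ E / π) * volume (closedBall (0 : E) 1) := by
  rw [volume_closedBall_zero_one, volume_closedBall_zero_one, ← h,
    ← ENNReal.ofReal_mul zero_le_two, ← ENNReal.ofReal_mul (sqrt_nonneg _)]
  refine ENNReal.ofReal_le_ofReal ?_
  set n := Module.finrank ℝ F
  push_cast
  have hn : (0 : ℝ) ≤ n := n.cast_nonneg
  have hΓ : Gamma ((n + 1 : ℝ) / 2 + 1) ≤ √((n : ℝ) + 1) * Gamma ((n : ℝ) / 2 + 1) :=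
    calc Gamma ((n + 1 : ℝ) / 2 + 1) = Gamma ((n : ℝ) / 2 + 3 / 2) := by ring_nf
      _ ≤ √((n : ℝ) / 2 + 1) * Gamma ((n : ℝ) / 2 + 1) :=
        Gamma_add_three_halves_le (by linarith)
      _ ≤ √((n : ℝ) + 1) * Gamma ((n : ℝ) / 2 + 1) := by gcongr; linarith
  have hsqrt : √(4 * ((n : ℝ) + 1) / π) = 2 * √((n : ℝ) + 1) / √π := by
    rw [sqrt_div' _ pi_pos.le, sqrt_mul' _ (by positivity), show (4 : ℝ) = 2 ^ 2 by norm_num,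
      sqrt_sq zero_le_two]
  have hπ : 0 < √π := sqrt_pos.mpr pi_pos
  have hn1 : 0 < √((n : ℝ) + 1) := sqrt_pos.mpr (by positivity)
  have hΓn : 0 < Gamma ((n : ℝ) / 2 + 1) := Gamma_pos_of_pos (by positivity)
  calc 2 * (√π ^ n / Gamma (n / 2 + 1))
      = 2 * √π ^ n * √(n + 1) / (√(n + 1) * Gamma (n / 2 + 1)) := by field_simp
    _ ≤ 2 * √π ^ n * √(n + 1) / Gamma ((n + 1) / 2 + 1) := by gcongr
    _ = √(4 * (n + 1) / π) * (√π ^ (n + 1) / Gamma ((n + 1) / 2 + 1)) := by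
      rw [hsqrt, pow_succ]; field_simp

theorem volume_closedBall_inter_abs_inner_le (w : E) (hw : ‖w‖ = 1) (t : ℝ) :
    volume (closedBall (0 : E) 1 ∩ {x | |⟪w, x⟫_ℝ| ≤ t})
      ≤ ENNReal.ofReal (2 * t) * volume (closedBall (0 : (ℝ ∙ w)ᗮ) 1) := by
  set f : E → ℝ × (ℝ ∙ w)ᗮ := fun x => (⟪w, x⟫_ℝ, (ℝ ∙ w)ᗮ.orthogonalProjectionOnto x)
  have hf : MeasurePreserving f := by
    let e : E ≃ₗᵢ[ℝ] WithLp 2 (ℝ × (ℝ ∙ w)ᗮ) := (ℝ ∙ w).orthogonalDecomposition.trans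
      (.withLpProdCongr 2 (LinearIsometryEquiv.toSpanUnitSingleton w hw).symm (.refl ℝ _))
    have hfe : f = WithLp.ofLp ∘ e := by
      ext x
      · simp only [Function.comp_apply, e, f, LinearIsometryEquiv.trans_apply,
          Submodule.orthogonalDecomposition_apply, LinearIsometryEquiv.withLpProdCongr_apply]
        rw [eq_comm, LinearIsometryEquiv.symm_apply_eq]
        ext
        simp [Submodule.starProjection_unit_singleton ℝ hw]
      · simp [e, f]
    rw [hfe]
    exact (WithLp.volume_preserving_ofLp ℝ _).comp e.measurePreserving
  have hsub : closedBall (0 : E) 1 ∩ {x | |⟪w, x⟫_ℝ| ≤ t} ⊆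
      f ⁻¹' (closedBall 0 t ×ˢ closedBall 0 1) := by
    rintro x ⟨hx, hxt⟩
    refine ⟨by simpa [f] using hxt, ?_⟩
    simp only [mem_closedBall_zero_iff] at hx ⊢
    exact (Submodule.norm_orthogonalProjectionOnto_apply_le _ x).trans hx
  calc _ ≤ volume (f ⁻¹' (closedBall 0 t ×ˢ closedBall 0 1)) := measure_mono hsub
    _ = volume (closedBall (0 : ℝ) t ×ˢ closedBall (0 : (ℝ ∙ w)ᗮ) 1) :=
      hf.measure_preimage (measurableSet_closedBall.prod measurableSet_closedBall).nullMeasurableSet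
    _ = _ := by rw [Measure.volume_eq_prod, Measure.prod_prod, Real.volume_closedBall]

theorem volume_closedBall_inter_abs_inner_le_mul (w : E) (hw : ‖w‖ = 1) {t : ℝ} (ht : 0 ≤ t) :
    volume (closedBall (0 : E) 1 ∩ {x | |⟪w, x⟫_ℝ| ≤ t})
      ≤ ENNReal.ofReal (t * √(4 * Module.finrank ℝ E / π)) * volume (closedBall (0 : E) 1) := by
  have hrank : Module.finrank ℝ (ℝ ∙ w)ᗮ + 1 = Module.finrank ℝ E := by
    rw [← (ℝ ∙ w).finrank_add_finrank_orthogonal, finrank_span_singleton (norm_ne_zero_iff.1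
      (hw ▸ one_ne_zero)), add_comm]
  calc _ ≤ ENNReal.ofReal (2 * t) * volume (closedBall (0 : (ℝ ∙ w)ᗮ) 1) :=
        volume_closedBall_inter_abs_inner_le w hw t
    _ = ENNReal.ofReal t * (ENNReal.ofReal 2 * volume (closedBall (0 : (ℝ ∙ w)ᗮ) 1)) := by
        rw [mul_comm 2 t, ENNReal.ofReal_mul ht, mul_assoc]
    _ ≤ ENNReal.ofReal t * (ENNReal.ofReal √(4 * Module.finrank ℝ E / π)
          * volume (closedBall (0 : E) 1)) := mul_le_mul_right (two_mul_volume_closedBall_le hrank) _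
    _ = _ := by rw [ENNReal.ofReal_mul ht, mul_assoc]

theorem cond_closedBall_abs_inner_le (w : E) (hw : ‖w‖ = 1) {t : ℝ} (ht : 0 ≤ t) :
    (volume[|closedBall (0 : E) 1]).real {x | |⟪w, x⟫_ℝ| ≤ t}
      ≤ t * √(4 * Module.finrank ℝ E / π) := by
  have hpos : volume (closedBall (0 : E) 1) ≠ 0 := (measure_closedBall_pos _ _ one_pos).ne'
  have hfin : volume (closedBall (0 : E) 1) ≠ ⊤ := measure_closedBall_lt_top.ne
  rw [measureReal_def, cond_apply measurableSet_closedBall]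
  refine ENNReal.toReal_le_of_le_ofReal (by positivity) ?_
  calc _ ≤ (volume (closedBall (0 : E) 1))⁻¹ * (ENNReal.ofReal (t * √(4 * Module.finrank ℝ E / π))
          * volume (closedBall (0 : E) 1)) := by
        gcongr; exact volume_closedBall_inter_abs_inner_le_mul w hw ht
    _ = _ := by rw [mul_comm, mul_assoc, ENNReal.mul_inv_cancel hpos hfin, mul_one]

end InnerProductSpace

theorem Set.subset_union_biUnion_inter_not {α : Type*} (s : ℕ → Set α) (p : ℕ → α → Prop)
    (hs : ∀ i, s (i + 1) = {x ∈ s i | p i x}) (n : ℕ) :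
    s 0 ⊆ s n ∪ ⋃ i ∈ Finset.range n, s i ∩ {x | ¬ p i x} := by
  induction n with
  | zero => simp
  | succ n ih =>
    intro x hx
    rcases ih hx with hxn | hx'
    · by_cases hp : p n x
      · exact Or.inl (hs n ▸ ⟨hxn, hp⟩)
      · exact Or.inr (Set.mem_biUnion (Finset.self_mem_range_succ n) ⟨hxn, hp⟩)
    · obtain ⟨i, hi, hxi⟩ := Set.mem_iUnion₂.1 hx'
      exact Or.inr (Set.mem_biUnion (Finset.range_subset_range.2 n.le_succ hi) hxi)

theorem sum_prob_auto_labeled_regions_lower_bound_general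
    (d : ℕ)
    -- P is the uniform distribution on the unit ball of ℝ^d
    (P : Measure (EuclideanSpace ℝ (Fin d)))
    (hP : P = ProbabilityTheory.cond volume (Metric.closedBall 0 1))
    (k : ℕ) (hk : 0 < k)
    (w : ℕ → EuclideanSpace ℝ (Fin d)) (t : ℕ → ℝ)
    (hw : ∀ i < k, ‖w i‖ = 1) (ht : ∀ i < k, t i ∈ Set.Icc (0 : ℝ) 1)
    -- the nested regions 𝒳^{(i)} (0-indexed: region 0 = 𝒳 = unit ball)
    (region : ℕ → Set (EuclideanSpace ℝ (Fin d)))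
    (hreg0 : region 0 = Metric.closedBall 0 1)
    (hregS : ∀ i, region (i + 1) = {x ∈ region i | |(inner ℝ (w i) x : ℝ)| < t i}) :
    1 - ((Finset.range k).inf' (Finset.nonempty_range_iff.mpr hk.ne') t)
          * Real.sqrt (4 * (d : ℝ) / Real.pi)
      ≤ ∑ i ∈ Finset.range k,
          (P (region i ∩ {x | t i ≤ |(inner ℝ (w i) x : ℝ)|})).toReal := by
  obtain ⟨j, hj, hmin⟩ :=
    (Finset.range k).exists_mem_eq_inf' (Finset.nonempty_range_iff.mpr hk.ne') t
  have hjk : j < k := Finset.mem_range.1 hj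
  have hball_pos := (measure_closedBall_pos volume (0 : EuclideanSpace ℝ (Fin d)) one_pos).ne'
  have hball_fin : volume (closedBall (0 : EuclideanSpace ℝ (Fin d)) 1) ≠ ⊤ :=
    measure_closedBall_lt_top.ne
  have : IsProbabilityMeasure P := hP ▸ cond_isProbabilityMeasure_of_finite hball_pos hball_fin
  have hP0 : P.real (region 0) = 1 := by
    rw [hreg0, hP, measureReal_def, cond_apply_self hball_pos hball_fin, ENNReal.toReal_one]
  have hanti : Antitone region := antitone_nat_of_succ_le fun i => hregS i ▸ Set.sep_subset _ _
  have hlast : region k ⊆ {x | |inner ℝ (w j) x| ≤ t j} := fun x hx => by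
    have hx' : x ∈ region (j + 1) := hanti hjk hx
    rw [hregS] at hx'
    exact hx'.2.le
  have hslab : P.real {x | |inner ℝ (w j) x| ≤ t j} ≤ t j * √(4 * d / π) := by
    simpa [hP] using InnerProductSpace.cond_closedBall_abs_inner_le (w j) (hw j hjk) (ht j hjk).1
  have hcover := Set.subset_union_biUnion_inter_not region _ hregS k
  simp only [not_lt] at hcover
  have hsplit := (measureReal_mono (μ := P) hcover).trans ((measureReal_union_le _ _).trans
    (add_le_add_right (measureReal_biUnion_finset_le _ _) _))
  simp only [hmin, ← measureReal_def]
  linarith [measureReal_mono (μ := P) hlast]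

/-- for nested margin-based regions in the unit ball under the uniform
distribution, the total mass of the per-round non-abstention regions is at least
1 − (min_i t̂_i) √(4d/π). -/
theorem sum_prob_auto_labeled_regions_lower_bound
    (d : ℕ) (hd : 2 ≤ d)
    -- P is the uniform distribution on the unit ball of ℝ^d
    (P : Measure (EuclideanSpace ℝ (Fin d)))
    (hP : P = ProbabilityTheory.cond volume (Metric.closedBall 0 1))
    (k : ℕ) (hk : 0 < k)
    (w : ℕ → EuclideanSpace ℝ (Fin d)) (t : ℕ → ℝ)
    (hw : ∀ i < k, ‖w i‖ = 1) (ht : ∀ i < k, t i ∈ Set.Icc (0 : ℝ) 1)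
    -- the nested regions 𝒳^{(i)} (0-indexed: region 0 = 𝒳 = unit ball)
    (region : ℕ → Set (EuclideanSpace ℝ (Fin d)))
    (hreg0 : region 0 = Metric.closedBall 0 1)
    (hregS : ∀ i, region (i + 1) = {x ∈ region i | |(inner ℝ (w i) x : ℝ)| < t i}) :
    1 - ((Finset.range k).inf' (Finset.nonempty_range_iff.mpr hk.ne') t)
          * Real.sqrt (4 * (d : ℝ) / Real.pi)
      ≤ ∑ i ∈ Finset.range k,
          (P (region i ∩ {x | t i ≤ |(inner ℝ (w i) x : ℝ)|})).toReal :=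
  sum_prob_auto_labeled_regions_lower_bound_general d P hP k hk w t hw ht region hreg0 hregS
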